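/- For every natural number i, there exists a polynomial P with rational coefficients of degree exactly i and leading coefficient 4^i / i! such that h_{k,k+i} = P(k) for every integer k ≥ i+1. -/

import Mathlib

/-- Integer binomial coefficient with the convention
`C(a,b) = a!/(b!(a-b)!)` if `0 ≤ b ≤ a` and `C(a,b) = 0` otherwise. -/
def ichoose (a b : ℤ) : ℤ := if 0 ≤ b ∧ b ≤ a then (a.toNat.choose b.toNat : ℤ) else 0

/-- The Delannoy numbers `D(n,m) = ∑_{k=0}^m C(m,k) C(n+m-k, m)`. -/
def delannoy (n m : ℕ) : ℕ :=
  ∑ k ∈ Finset.range (m + 1), Nat.choose m k * Nat.choose (n + m - k) m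

/-- `h k n = ∑_{i=0}^{k-1} D(k-1-i, i) C(n-i+k-2, 2k-2)` is the number of
column-convex polyominoes with `k` columns and area `n`. -/
def ccPoly (k n : ℕ) : ℤ :=
  ∑ i ∈ Finset.range k,
    (delannoy (k - 1 - i) i : ℤ) * ichoose ((n : ℤ) - i + k - 2) (2 * (k : ℤ) - 2)

/-- `r k m = ∑_{i=k}^{m-k} h_{k,i} h_{k,m-i}` is the number of plateau polycubes
of width `k` and lateral area `m`. -/
def plateau (k m : ℕ) : ℤ :=
  ∑ i ∈ Finset.Icc k (m - k), ccPoly k i * ccPoly k (m - i)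

/-!
With `k` fixed and `i < k`, only the summands `j ≤ i` of `h_{k,k+i}` survive, and they read
`D(k-1-j, j) · C(2k-2+i-j, i-j)`. Both factors are binomial polynomials in `k`:
`D(k-1-j, j) = ∑_t C(j,t) C(k-1-t, j)` has degree `j` and leading coefficient `2^j/j!`, and
`C(2k-2+i-j, i-j)` has degree `i-j` and leading coefficient `2^(i-j)/(i-j)!`. Summing the
products, the coefficient of `k^i` is `∑_j 2^i/(j!(i-j)!) = 2^i · 2^i/i!`.
-/

open Polynomial Finset Nat

noncomputable section

variable {K : Type*} [Field K]

variable (K) in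
def binomPoly (n : ℕ) : K[X] := C ((n ! : K)⁻¹) * descPochhammer K n

theorem binomPoly_eval_natCast [CharZero K] (n m : ℕ) :
    (binomPoly K n).eval (m : K) = m.choose n := by
  rw [binomPoly, eval_mul, eval_C, descPochhammer_eval_eq_descFactorial,
    descFactorial_eq_factorial_mul_choose]
  have : (n ! : K) ≠ 0 := Nat.cast_ne_zero.2 n.factorial_ne_zero
  push_cast
  field_simp

theorem natDegree_binomPoly [CharZero K] (n : ℕ) : (binomPoly K n).natDegree = n := by
  rw [binomPoly, natDegree_C_mul (inv_ne_zero (Nat.cast_ne_zero.2 n.factorial_ne_zero)),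
    descPochhammer_natDegree]

theorem leadingCoeff_binomPoly (n : ℕ) : (binomPoly K n).leadingCoeff = (n ! : K)⁻¹ := by
  rw [binomPoly, leadingCoeff_mul, leadingCoeff_C, (monic_descPochhammer K n).leadingCoeff, mul_one]

theorem natDegree_binomPoly_comp_le [CharZero K] (n : ℕ) {q : K[X]} (hq : q.natDegree ≤ 1) :
    ((binomPoly K n).comp q).natDegree ≤ n :=
  natDegree_comp_le.trans <| by
    rw [natDegree_binomPoly]; exact mul_le_of_le_one_right (Nat.zero_le _) hq

theorem coeff_binomPoly_comp [CharZero K] (n : ℕ) {q : K[X]} (hq : q.natDegree = 1) :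
    ((binomPoly K n).comp q).coeff n = q.leadingCoeff ^ n / n ! := by
  have h := coeff_comp_degree_mul_degree (p := binomPoly K n) (hq ▸ one_ne_zero)
  rw [natDegree_binomPoly, hq, mul_one, leadingCoeff_binomPoly] at h
  rw [h, div_eq_inv_mul]

variable (K) in
def delannoyPoly (m : ℕ) : K[X] :=
  ∑ t ∈ range (m + 1), C (m.choose t : K) * (binomPoly K m).comp (X - C ((t : K) + 1))

theorem delannoyPoly_eval [CharZero K] {m k : ℕ} (h : m < k) :
    (delannoyPoly K m).eval (k : K) = delannoy (k - 1 - m) m := by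
  rw [delannoyPoly, eval_finsetSum, delannoy, Nat.cast_sum]
  refine sum_congr rfl fun t ht => ?_
  have ht : t ≤ m := mem_range_succ_iff.1 ht
  have harg : (k : K) - ((t : K) + 1) = ((k - 1 - m + m - t : ℕ) : K) := by
    rw [show k - 1 - m + m - t = k - (t + 1) by omega, Nat.cast_sub (by omega)]
    push_cast; ring
  rw [eval_mul, eval_C, eval_comp, eval_sub, eval_X, eval_C, harg, binomPoly_eval_natCast,
    Nat.cast_mul]

theorem natDegree_delannoyPoly_le [CharZero K] (m : ℕ) : (delannoyPoly K m).natDegree ≤ m :=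
  natDegree_sum_le_of_forall_le _ _ fun _ _ =>
    (natDegree_C_mul_le _ _).trans (natDegree_binomPoly_comp_le m (natDegree_X_sub_C _).le)

theorem coeff_delannoyPoly [CharZero K] (m : ℕ) : (delannoyPoly K m).coeff m = 2 ^ m / m ! := by
  simp only [delannoyPoly, finsetSum_coeff, coeff_C_mul,
    coeff_binomPoly_comp m (natDegree_X_sub_C _), leadingCoeff_X_sub_C, one_pow]
  rw [← sum_mul, ← Nat.cast_sum, sum_range_choose]
  push_cast; ring

theorem binomPoly_comp_eval [CharZero K] (n : ℕ) {k : ℕ} (hk : 1 ≤ k) :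
    ((binomPoly K n).comp (C 2 * X + C ((n : K) - 2))).eval (k : K) = (2 * k - 2 + n).choose n := by
  have harg : 2 * (k : K) + ((n : K) - 2) = ((2 * k - 2 + n : ℕ) : K) := by
    rw [Nat.cast_add, Nat.cast_sub (by omega)]
    push_cast; ring
  rw [eval_comp, eval_add, eval_mul, eval_C, eval_X, eval_C, harg, binomPoly_eval_natCast]

variable (K) in
def ccDiagPoly (i : ℕ) : K[X] :=
  ∑ j ∈ range (i + 1),
    delannoyPoly K j * (binomPoly K (i - j)).comp (C 2 * X + C (((i - j : ℕ) : K) - 2))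

theorem natDegree_ccDiagPoly_le [CharZero K] (i : ℕ) : (ccDiagPoly K i).natDegree ≤ i := by
  refine natDegree_sum_le_of_forall_le _ _ fun j hj => natDegree_mul_le.trans ?_
  have hj : j ≤ i := mem_range_succ_iff.1 hj
  have := natDegree_binomPoly_comp_le (i - j)
    (natDegree_linear_le : (C (2 : K) * X + C (((i - j : ℕ) : K) - 2)).natDegree ≤ 1)
  have := natDegree_delannoyPoly_le (K := K) j
  omega

theorem coeff_ccDiagPoly [CharZero K] (i : ℕ) : (ccDiagPoly K i).coeff i = 4 ^ i / i ! := by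
  have hterm : ∀ j ∈ range (i + 1), (delannoyPoly K j *
      (binomPoly K (i - j)).comp (C 2 * X + C (((i - j : ℕ) : K) - 2))).coeff i =
        i.choose j * 2 ^ i / i ! := by
    intro j hj
    have hj : j ≤ i := mem_range_succ_iff.1 hj
    have hlin : (C 2 * X + C (((i - j : ℕ) : K) - 2)).natDegree = 1 :=
      natDegree_linear two_ne_zero
    have hmul := coeff_mul_add_eq_of_natDegree_le (natDegree_delannoyPoly_le (K := K) j)
      (natDegree_binomPoly_comp_le (i - j) hlin.le)
    rw [Nat.add_sub_cancel' hj] at hmul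
    rw [hmul, coeff_delannoyPoly, coeff_binomPoly_comp _ hlin,
      leadingCoeff_linear two_ne_zero, Nat.cast_choose K hj]
    have : (i ! : K) ≠ 0 := Nat.cast_ne_zero.2 i.factorial_ne_zero
    have : (j ! : K) ≠ 0 := Nat.cast_ne_zero.2 j.factorial_ne_zero
    have : ((i - j) ! : K) ≠ 0 := Nat.cast_ne_zero.2 (i - j).factorial_ne_zero
    field_simp
    rw [← pow_add, Nat.add_sub_cancel' hj]
  rw [ccDiagPoly, finsetSum_coeff, sum_congr rfl hterm, ← sum_div, ← sum_mul, ← Nat.cast_sum,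
    sum_range_choose]
  push_cast
  rw [← mul_pow]
  norm_num

theorem ichoose_natCast_add_self (a b : ℕ) :
    ichoose ((a + b : ℕ) : ℤ) a = (a + b).choose b := by
  rw [ichoose, if_pos (by omega), Int.toNat_natCast, Int.toNat_natCast, Nat.choose_symm_add]

theorem ichoose_eq_zero_of_lt {a b : ℤ} (h : a < b) : ichoose a b = 0 :=
  if_neg (by omega)

theorem ccPoly_add_eq_sum {i k : ℕ} (h : i < k) :
    ccPoly k (k + i) = ∑ j ∈ range (i + 1),
      (delannoy (k - 1 - j) j : ℤ) * (2 * k - 2 + (i - j)).choose (i - j) := by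
  rw [ccPoly, ← sum_subset (range_subset_range.2 h) fun j _ hj => ?_]
  · refine sum_congr rfl fun j hj => ?_
    have hj : j ≤ i := mem_range_succ_iff.1 hj
    have harg : ((k + i : ℕ) : ℤ) - j + k - 2 = ((2 * k - 2 + (i - j) : ℕ) : ℤ) := by omega
    rw [harg, show 2 * (k : ℤ) - 2 = ((2 * k - 2 : ℕ) : ℤ) by omega, ichoose_natCast_add_self]
  · rw [ichoose_eq_zero_of_lt (by simp only [mem_range, not_lt] at hj; omega), mul_zero]

theorem ccDiagPoly_eval [CharZero K] {i k : ℕ} (h : i < k) :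
    (ccDiagPoly K i).eval (k : K) = ccPoly k (k + i) := by
  rw [ccPoly_add_eq_sum h, ccDiagPoly, eval_finsetSum]
  push_cast
  refine sum_congr rfl fun j hj => ?_
  have hj : j ≤ i := mem_range_succ_iff.1 hj
  rw [eval_mul, delannoyPoly_eval (by omega), binomPoly_comp_eval _ (by omega)]

end

/-- For every `i`, `h_{k,k+i}` is a polynomial in `k` of degree exactly `i` with
leading coefficient `4ⁱ/i!`, for all `k ≥ i+1`. -/
theorem ccPoly_polynomial (i : ℕ) :
    ∃ P : Polynomial ℚ, P.degree = i ∧ P.leadingCoeff = 4 ^ i / (Nat.factorial i : ℚ) ∧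
      ∀ k : ℕ, i + 1 ≤ k → (ccPoly k (k + i) : ℚ) = P.eval (k : ℚ) := by
  have hcoeff : (ccDiagPoly ℚ i).coeff i = 4 ^ i / i ! := coeff_ccDiagPoly i
  have hcoeff_ne : (ccDiagPoly ℚ i).coeff i ≠ 0 := by rw [hcoeff]; positivity
  have hdeg := natDegree_eq_of_le_of_coeff_ne_zero (natDegree_ccDiagPoly_le i) hcoeff_ne
  refine ⟨ccDiagPoly ℚ i, ?_, ?_, fun k hk => (ccDiagPoly_eval hk).symm⟩
  · exact degree_eq_of_le_of_coeff_ne_zero (degree_le_of_natDegree_le hdeg.le) hcoeff_ne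
  · rw [leadingCoeff, hdeg, hcoeff]
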